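/- Let b₀, b₁ > 0. Then ∫ D(l₀,l₁) d(Lap(b₀) ⊗ Lap(b₁)) ≤ ∫ err*(G(l₀,l₁)) d(Lap(b₀) ⊗ Lap(b₁)) + (5/2)·(b₀ + b₁). (Utility guarantee of Proposition 2: in expectation over the Laplace noises, the prediction-change sum of Algorithm 2's classifier exceeds the expected optimal prediction-change sum by at most (5/2)(1/(n₀ε₂) + 1/(n₁ε₃)), where b₀ = 1/(n₀ε₂) and b₁ = 1/(n₁ε₃).) -/

import Mathlib

/-! Fix the noise `(l₀, l₁)`. Away from division by zero, `G = |(α - β) - D|`, and `D` exceeds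
`α - β` by at most `|α̃ - α| + |β̃ - β|`; hence `D ≤ |α - β| - G + 2 (|α̃ - α| + |β̃ - β|)`.
Any pair of classifiers with parity gap at most `γ` changes at least `|α - β| - γ` predictions,
so `|α - β| - G ≤ err*(G)`. Clipping to `[0,1]` is `1`-Lipschitz and fixes `α, β`, so
`|α̃ - α| ≤ |l₀|` and `|β̃ - β| ≤ |l₁|`; integrating, with `E|l| = b` under `Lap b`, gives the
bound with `2` in place of `5/2`. -/

open MeasureTheory

/-- The Laplace distribution on `ℝ` with scale `b`. -/
noncomputable def Lap (b : ℝ) : Measure ℝ :=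
  volume.withDensity fun x => ENNReal.ofReal ((2 * b)⁻¹ * Real.exp (-|x| / b))

/-- Projection onto `[0,1]`. -/
noncomputable def clip (x : ℝ) : ℝ := min (max x 0) 1

/-- The statistical parity gap of Algorithm 2's classifier as a function of the Laplace
noise realizations `(l₀, l₁)`, with clipped perturbed rates `α̃ = [α+l₀]₀¹`,
`β̃ = [β+l₁]₀¹` (division by zero yields `0`, as in Lean's convention). -/
noncomputable def G (α β l₀ l₁ : ℝ) : ℝ :=
  let αt := clip (α + l₀)
  let βt := clip (β + l₁)
  if βt ≤ αt then
    |α * (αt + βt) / (2 * αt) - β - (1 - β) * (αt - βt) / (2 * (1 - βt))|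
  else
    |β * (αt + βt) / (2 * βt) - α - (1 - α) * (βt - αt) / (2 * (1 - αt))|

/-- The prediction-change sum of Algorithm 2's classifier relative to the input
classifiers, as a function of the Laplace noise realizations `(l₀, l₁)`. -/
noncomputable def Dsum (α β l₀ l₁ : ℝ) : ℝ :=
  let αt := clip (α + l₀)
  let βt := clip (β + l₁)
  if βt ≤ αt then
    α * (αt - βt) / (2 * αt) + (1 - β) * (αt - βt) / (2 * (1 - βt))
  else
    β * (βt - αt) / (2 * βt) + (1 - α) * (βt - αt) / (2 * (1 - αt))

/-- `err*(γ)`: the optimal prediction-change sum among pairs of measurable classifiers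
whose statistical parity gap is at most `γ`. -/
noncomputable def errStar {𝒳 : Type*} [MeasurableSpace 𝒳]
    (μ₀ μ₁ : Measure 𝒳) (h₀ h₁ : 𝒳 → Bool) (γ : ℝ) : ℝ :=
  sInf { r : ℝ | ∃ g₀ g₁ : 𝒳 → Bool, Measurable g₀ ∧ Measurable g₁ ∧
    |(μ₀ {x | g₀ x = true}).toReal - (μ₁ {x | g₁ x = true}).toReal| ≤ γ ∧
    r = (μ₀ {x | g₀ x ≠ h₀ x}).toReal + (μ₁ {x | g₁ x ≠ h₁ x}).toReal }

open Set Real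
open scoped symmDiff

lemma clip_nonneg (x : ℝ) : 0 ≤ clip x := le_min (le_max_right _ _) zero_le_one

lemma clip_le_one (x : ℝ) : clip x ≤ 1 := min_le_right _ _

lemma abs_clip_add_sub_le {x : ℝ} (hx0 : 0 ≤ x) (hx1 : x ≤ 1) (l : ℝ) :
    |clip (x + l) - x| ≤ |l| :=
  calc |clip (x + l) - x| = |min (max (x + l) 0) 1 - min (max x 0) 1| := by
        rw [max_eq_left hx0, min_eq_left hx1, clip]
    _ ≤ max |max (x + l) 0 - max x 0| |1 - 1| := abs_min_sub_min_le_max _ _ _ _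
    _ = |max (x + l) 0 - max x 0| := by simp
    _ ≤ |x + l - x| := abs_max_sub_max_le_abs _ _ _
    _ = |l| := by rw [add_sub_cancel_left]

lemma le_abs_sub_abs_sub_add_two_mul {x D ε : ℝ} (h : D ≤ x + ε) (hε : 0 ≤ ε) :
    D ≤ |x| - |x - D| + 2 * ε := by
  have := le_abs_self x
  rcases abs_cases (x - D) with ⟨hxD, -⟩ | ⟨hxD, -⟩ <;> linarith

lemma mul_le_abs_of_nonneg_of_le_one {x y : ℝ} (hy0 : 0 ≤ y) (hy1 : y ≤ 1) : x * y ≤ |x| :=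
  (mul_le_mul_of_nonneg_right (le_abs_self x) hy0).trans
    (mul_le_of_le_one_right (abs_nonneg x) hy1)

-- In the `branch_*` lemmas, `s` and `t` stand for `α̃` and `β̃` in the branch `β̃ ≤ α̃`.
lemma branch_nonneg {α β s t : ℝ} (hα : 0 ≤ α) (hβ : β ≤ 1) (ht0 : 0 ≤ t) (hts : t ≤ s)
    (hs1 : s ≤ 1) :
    0 ≤ α * (s - t) / (2 * s) + (1 - β) * (s - t) / (2 * (1 - t)) :=
  add_nonneg (div_nonneg (mul_nonneg hα (sub_nonneg.2 hts)) (by linarith))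
    (div_nonneg (mul_nonneg (sub_nonneg.2 hβ) (sub_nonneg.2 hts)) (by linarith))

lemma branch_le_sub_add {α β s t : ℝ} (ht0 : 0 ≤ t) (hts : t < s) (hs1 : s ≤ 1) :
    α * (s - t) / (2 * s) + (1 - β) * (s - t) / (2 * (1 - t)) ≤
      α - β + |s - α| + |t - β| := by
  have hs : 0 < s := ht0.trans_lt hts
  have ht1 : 0 < 1 - t := by linarith
  -- `D = (α - β) + (s - α)(1 - θ₀) + (β - t)(1 - θ₁)` with weights `θ₀, θ₁ ∈ [0, 1/2]`
  have hD : α * (s - t) / (2 * s) + (1 - β) * (s - t) / (2 * (1 - t)) =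
      α - β + (s - α) * (1 - (s - t) / (2 * s)) + (β - t) * (1 - (s - t) / (2 * (1 - t))) := by
    field_simp
    ring
  have hθ₀ : (s - t) / (2 * s) ≤ 1 := by rw [div_le_one (by positivity)]; linarith
  have hθ₁ : (s - t) / (2 * (1 - t)) ≤ 1 := by rw [div_le_one (by positivity)]; linarith
  have hθ₀' : 0 ≤ (s - t) / (2 * s) := div_nonneg (by linarith) (by positivity)
  have hθ₁' : 0 ≤ (s - t) / (2 * (1 - t)) := div_nonneg (by linarith) (by positivity)
  rw [hD, abs_sub_comm t β]
  linarith [mul_le_abs_of_nonneg_of_le_one (x := s - α) (sub_nonneg.2 hθ₀) (by linarith),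
    mul_le_abs_of_nonneg_of_le_one (x := β - t) (sub_nonneg.2 hθ₁) (by linarith)]

lemma branch_le {α β s t : ℝ} (ht0 : 0 ≤ t) (hts : t ≤ s) (hs1 : s ≤ 1) :
    α * (s - t) / (2 * s) + (1 - β) * (s - t) / (2 * (1 - t)) ≤
      |α - β| - |α * (s + t) / (2 * s) - β - (1 - β) * (s - t) / (2 * (1 - t))| +
        2 * (|s - α| + |t - β|) := by
  rcases hts.eq_or_lt with rfl | hlt
  · simp only [sub_self, mul_zero, zero_div, add_zero]
    rcases eq_or_ne t 0 with rfl | ht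
    · simp only [add_zero, mul_zero, zero_div, zero_sub, sub_zero, abs_neg]
      linarith [abs_nonneg (α - β), abs_nonneg α, abs_nonneg β]
    · rw [show α * (t + t) / (2 * t) = α by field_simp; ring, sub_zero, sub_self, zero_add]
      positivity
  · have hs : s ≠ 0 := (ht0.trans_lt hlt).ne'
    have ht1 : 1 - t ≠ 0 := by linarith
    -- away from the junk values, `G` is `|(α - β) - D|`
    rw [show α * (s + t) / (2 * s) - β - (1 - β) * (s - t) / (2 * (1 - t)) =
        α - β - (α * (s - t) / (2 * s) + (1 - β) * (s - t) / (2 * (1 - t))) by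
      field_simp; ring]
    exact le_abs_sub_abs_sub_add_two_mul
      (by linarith [branch_le_sub_add (α := α) (β := β) ht0 hlt hs1]) (by positivity)

lemma Dsum_le (α β l₀ l₁ : ℝ) :
    Dsum α β l₀ l₁ ≤
      |α - β| - G α β l₀ l₁ + 2 * (|clip (α + l₀) - α| + |clip (β + l₁) - β|) := by
  unfold Dsum G
  dsimp only
  split_ifs with h
  · exact branch_le (clip_nonneg _) h (clip_le_one _)
  · have := branch_le (α := β) (β := α) (clip_nonneg _) (le_of_not_ge h) (clip_le_one _)
    rwa [abs_sub_comm β α, add_comm (clip (β + l₁)), add_comm |clip (β + l₁) - β|] at this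

lemma Dsum_nonneg {α β : ℝ} (hα0 : 0 ≤ α) (hα1 : α ≤ 1) (hβ0 : 0 ≤ β) (hβ1 : β ≤ 1)
    (l₀ l₁ : ℝ) : 0 ≤ Dsum α β l₀ l₁ := by
  unfold Dsum
  dsimp only
  split_ifs with h
  · exact branch_nonneg hα0 hβ1 (clip_nonneg _) h (clip_le_one _)
  · exact branch_nonneg hβ0 hα1 (clip_nonneg _) (le_of_not_ge h) (clip_le_one _)

lemma G_nonneg (α β l₀ l₁ : ℝ) : 0 ≤ G α β l₀ l₁ := by
  unfold G
  dsimp only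
  split_ifs <;> exact abs_nonneg _

lemma measurable_G (α β : ℝ) : Measurable fun p : ℝ × ℝ => G α β p.1 p.2 := by
  have hclip : Measurable clip := by unfold clip; fun_prop
  unfold G
  refine Measurable.ite (measurableSet_le (by fun_prop) (by fun_prop)) ?_ ?_ <;> fun_prop

section errStar

variable {𝒳 : Type*} [MeasurableSpace 𝒳] {μ₀ μ₁ : Measure 𝒳} {h₀ h₁ : 𝒳 → Bool}

lemma abs_measureReal_sub_le_symmDiff {α : Type*} [MeasurableSpace α] (μ : Measure α)
    [IsFiniteMeasure μ] (s t : Set α) : |μ.real s - μ.real t| ≤ μ.real (s ∆ t) := by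
  have key (s t : Set α) : μ.real s ≤ μ.real t + μ.real (t ∆ s) := by
    simpa [← bot_eq_empty] using measureReal_symmDiff_le (μ := μ) (s := ∅) (t := t) s
  rw [abs_sub_le_iff]
  constructor
  · linarith [symmDiff_comm t s ▸ key s t]
  · linarith [key t s]

lemma setOf_ne_eq_symmDiff {α : Type*} (g h : α → Bool) :
    {x | g x ≠ h x} = {x | g x = true} ∆ {x | h x = true} := by
  ext x
  cases hg : g x <;> cases hh : h x <;> simp [mem_symmDiff, hg, hh]

variable (μ₀ μ₁ h₀ h₁) in
def feasibleCosts (γ : ℝ) : Set ℝ :=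
  { r : ℝ | ∃ g₀ g₁ : 𝒳 → Bool, Measurable g₀ ∧ Measurable g₁ ∧
    |(μ₀ {x | g₀ x = true}).toReal - (μ₁ {x | g₁ x = true}).toReal| ≤ γ ∧
    r = (μ₀ {x | g₀ x ≠ h₀ x}).toReal + (μ₁ {x | g₁ x ≠ h₁ x}).toReal }

lemma feasibleCosts_bddBelow (γ : ℝ) : BddBelow (feasibleCosts μ₀ μ₁ h₀ h₁ γ) :=
  ⟨0, by rintro _ ⟨g₀, g₁, -, -, -, rfl⟩; positivity⟩

lemma feasibleCosts_mono {γ γ' : ℝ} (h : γ ≤ γ') :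
    feasibleCosts μ₀ μ₁ h₀ h₁ γ ⊆ feasibleCosts μ₀ μ₁ h₀ h₁ γ' := by
  rintro _ ⟨g₀, g₁, hg₀, hg₁, hgap, rfl⟩
  exact ⟨g₀, g₁, hg₀, hg₁, hgap.trans h, rfl⟩

lemma add_mem_feasibleCosts {γ : ℝ} (hγ : 0 ≤ γ) :
    (μ₀ {x | h₀ x = true}).toReal + (μ₁ {x | h₁ x = true}).toReal ∈
      feasibleCosts μ₀ μ₁ h₀ h₁ γ :=
  ⟨fun _ => false, fun _ => false, measurable_const, measurable_const, by simpa using hγ,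
    by simp⟩

lemma errStar_nonneg (γ : ℝ) : 0 ≤ errStar μ₀ μ₁ h₀ h₁ γ :=
  Real.sInf_nonneg (by rintro _ ⟨g₀, g₁, -, -, -, rfl⟩; positivity)

lemma errStar_antitoneOn : AntitoneOn (errStar μ₀ μ₁ h₀ h₁) (Ici 0) :=
  fun _ hγ _ _ h => csInf_le_csInf (feasibleCosts_bddBelow _) ⟨_, add_mem_feasibleCosts hγ⟩
    (feasibleCosts_mono h)

lemma errStar_le_add {γ : ℝ} (hγ : 0 ≤ γ) :
    errStar μ₀ μ₁ h₀ h₁ γ ≤ (μ₀ {x | h₀ x = true}).toReal + (μ₁ {x | h₁ x = true}).toReal :=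
  csInf_le (feasibleCosts_bddBelow _) (add_mem_feasibleCosts hγ)

lemma errStar_le_two [IsProbabilityMeasure μ₀] [IsProbabilityMeasure μ₁] {γ : ℝ} (hγ : 0 ≤ γ) :
    errStar μ₀ μ₁ h₀ h₁ γ ≤ 2 := by
  have h₀_le : (μ₀ {x | h₀ x = true}).toReal ≤ 1 := measureReal_le_one
  have h₁_le : (μ₁ {x | h₁ x = true}).toReal ≤ 1 := measureReal_le_one
  linarith [errStar_le_add (μ₀ := μ₀) (μ₁ := μ₁) (h₀ := h₀) (h₁ := h₁) hγ]

-- Any feasible pair moves each rate by at most its own prediction-change mass.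
lemma abs_sub_le_errStar_add [IsFiniteMeasure μ₀] [IsFiniteMeasure μ₁] {γ : ℝ} (hγ : 0 ≤ γ) :
    |(μ₀ {x | h₀ x = true}).toReal - (μ₁ {x | h₁ x = true}).toReal| ≤
      errStar μ₀ μ₁ h₀ h₁ γ + γ := by
  rw [← sub_le_iff_le_add]
  refine le_csInf ⟨_, add_mem_feasibleCosts hγ⟩ ?_
  rintro _ ⟨g₀, g₁, -, -, hgap, rfl⟩
  have hμ₀ := abs_measureReal_sub_le_symmDiff μ₀ {x | g₀ x = true} {x | h₀ x = true}
  have hμ₁ := abs_measureReal_sub_le_symmDiff μ₁ {x | g₁ x = true} {x | h₁ x = true}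
  rw [← setOf_ne_eq_symmDiff] at hμ₀ hμ₁
  simp only [measureReal_def] at hμ₀ hμ₁
  linarith [abs_sub_le (μ₀ {x | h₀ x = true}).toReal (μ₀ {x | g₀ x = true}).toReal
      (μ₁ {x | h₁ x = true}).toReal,
    abs_sub_le (μ₀ {x | g₀ x = true}).toReal (μ₁ {x | g₁ x = true}).toReal
      (μ₁ {x | h₁ x = true}).toReal,
    abs_sub_comm (μ₀ {x | h₀ x = true}).toReal (μ₀ {x | g₀ x = true}).toReal]

lemma measurable_errStar_comp {Ω : Type*} [MeasurableSpace Ω] {f : Ω → ℝ} (hf : Measurable f)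
    (hf0 : ∀ ω, 0 ≤ f ω) : Measurable fun ω => errStar μ₀ μ₁ h₀ h₁ (f ω) := by
  have hanti : Antitone fun γ => errStar μ₀ μ₁ h₀ h₁ (max γ 0) := fun γ γ' h =>
    errStar_antitoneOn (le_max_right γ 0) (le_max_right γ' 0) (max_le_max_right 0 h)
  simpa only [Function.comp_def, max_eq_left (hf0 _)] using hanti.measurable.comp hf

lemma integrable_errStar_comp [IsProbabilityMeasure μ₀] [IsProbabilityMeasure μ₁]
    {Ω : Type*} [MeasurableSpace Ω] {ν : Measure Ω} [IsFiniteMeasure ν] {f : Ω → ℝ}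
    (hf : Measurable f) (hf0 : ∀ ω, 0 ≤ f ω) :
    Integrable (fun ω => errStar μ₀ μ₁ h₀ h₁ (f ω)) ν :=
  .of_bound (measurable_errStar_comp hf hf0).aestronglyMeasurable 2 (ae_of_all _ fun ω => by
    rw [Real.norm_of_nonneg (errStar_nonneg _)]
    exact errStar_le_two (hf0 ω))

end errStar

section Laplace

variable {b : ℝ}

lemma integral_exp_neg_div_Ioi (hb : 0 < b) : ∫ t in Ioi (0 : ℝ), exp (-t / b) = b := by
  have h := integral_rpow_mul_exp_neg_mul_Ioi one_pos (inv_pos.2 hb)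
  simp only [sub_self, rpow_zero, one_mul, rpow_one, Gamma_one, mul_one, one_div, inv_inv] at h
  refine (setIntegral_congr_fun measurableSet_Ioi fun t _ => ?_).trans h
  ring_nf

lemma integral_mul_exp_neg_div_Ioi (hb : 0 < b) :
    ∫ t in Ioi (0 : ℝ), t * exp (-t / b) = b ^ 2 := by
  have h := integral_rpow_mul_exp_neg_mul_Ioi two_pos (inv_pos.2 hb)
  norm_num [Gamma_two] at h
  refine (setIntegral_congr_fun measurableSet_Ioi fun t _ => ?_).trans h
  ring_nf

lemma integral_lapDensity (hb : 0 < b) : ∫ x : ℝ, (2 * b)⁻¹ * exp (-|x| / b) = 1 := by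
  rw [integral_const_mul, integral_comp_abs (f := fun t => exp (-t / b)),
    integral_exp_neg_div_Ioi hb]
  field_simp

lemma integral_abs_mul_lapDensity (hb : 0 < b) :
    ∫ x : ℝ, |x| * ((2 * b)⁻¹ * exp (-|x| / b)) = b := by
  simp_rw [mul_left_comm |_| (2 * b)⁻¹]
  rw [integral_const_mul, integral_comp_abs (f := fun t => t * exp (-t / b)),
    integral_mul_exp_neg_div_Ioi hb]
  field_simp

lemma isProbabilityMeasure_Lap (hb : 0 < b) : IsProbabilityMeasure (Lap b) := by
  have hint : Integrable fun x : ℝ => (2 * b)⁻¹ * exp (-|x| / b) :=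
    Integrable.of_integral_ne_zero (by rw [integral_lapDensity hb]; exact one_ne_zero)
  constructor
  rw [Lap, withDensity_apply _ MeasurableSet.univ, Measure.restrict_univ,
    ← ofReal_integral_eq_lintegral_ofReal hint (ae_of_all _ fun x => by positivity),
    integral_lapDensity hb, ENNReal.ofReal_one]

lemma integral_abs_Lap (hb : 0 < b) : ∫ x, |x| ∂Lap b = b := by
  rw [Lap, integral_withDensity_eq_integral_toReal_smul (by fun_prop)
    (ae_of_all _ fun _ => ENNReal.ofReal_lt_top)]
  refine (integral_congr_ae (ae_of_all _ fun x => ?_)).trans (integral_abs_mul_lapDensity hb)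
  rw [ENNReal.toReal_ofReal (by positivity), smul_eq_mul, mul_comm]

lemma integrable_abs_Lap (hb : 0 < b) : Integrable (fun x : ℝ => |x|) (Lap b) :=
  Integrable.of_integral_ne_zero (by rw [integral_abs_Lap hb]; exact hb.ne')

end Laplace

lemma Dsum_le_errStar_G_add {𝒳 : Type*} [MeasurableSpace 𝒳] {μ₀ μ₁ : Measure 𝒳}
    [IsProbabilityMeasure μ₀] [IsProbabilityMeasure μ₁] {h₀ h₁ : 𝒳 → Bool} {α β : ℝ}
    (hα : α = (μ₀ {x | h₀ x = true}).toReal) (hβ : β = (μ₁ {x | h₁ x = true}).toReal)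
    (l₀ l₁ : ℝ) :
    Dsum α β l₀ l₁ ≤ errStar μ₀ μ₁ h₀ h₁ (G α β l₀ l₁) + 2 * (|l₀| + |l₁|) := by
  have hα0 : 0 ≤ α := hα ▸ measureReal_nonneg
  have hα1 : α ≤ 1 := hα ▸ measureReal_le_one
  have hβ0 : 0 ≤ β := hβ ▸ measureReal_nonneg
  have hβ1 : β ≤ 1 := hβ ▸ measureReal_le_one
  have hgap := abs_sub_le_errStar_add (μ₀ := μ₀) (μ₁ := μ₁) (h₀ := h₀) (h₁ := h₁)
    (G_nonneg α β l₀ l₁)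
  rw [← hα, ← hβ] at hgap
  linarith [Dsum_le α β l₀ l₁, abs_clip_add_sub_le hα0 hα1 l₀, abs_clip_add_sub_le hβ0 hβ1 l₁]

theorem algorithm2_utility_expectation_general
    {𝒳 : Type*} [MeasurableSpace 𝒳]
    (μ₀ μ₁ : Measure 𝒳) [IsProbabilityMeasure μ₀] [IsProbabilityMeasure μ₁]
    (h₀ h₁ : 𝒳 → Bool)
    (α β : ℝ)
    (hα : α = (μ₀ {x | h₀ x = true}).toReal)
    (hβ : β = (μ₁ {x | h₁ x = true}).toReal)
    (b₀ b₁ : ℝ) (hb₀ : 0 < b₀) (hb₁ : 0 < b₁) :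
    ∫ p : ℝ × ℝ, Dsum α β p.1 p.2 ∂((Lap b₀).prod (Lap b₁)) ≤
      (∫ p : ℝ × ℝ, errStar μ₀ μ₁ h₀ h₁ (G α β p.1 p.2) ∂((Lap b₀).prod (Lap b₁))) +
        (5 / 2) * (b₀ + b₁) := by
  have := isProbabilityMeasure_Lap hb₀
  have := isProbabilityMeasure_Lap hb₁
  have hErr : Integrable (fun p : ℝ × ℝ => errStar μ₀ μ₁ h₀ h₁ (G α β p.1 p.2))
      ((Lap b₀).prod (Lap b₁)) :=
    integrable_errStar_comp (measurable_G α β) fun p => G_nonneg α β p.1 p.2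
  have hL₀ := (integrable_abs_Lap hb₀).comp_fst (Lap b₁)
  have hL₁ := (integrable_abs_Lap hb₁).comp_snd (Lap b₀)
  have hNoise : Integrable (fun p : ℝ × ℝ => 2 * (|p.1| + |p.2|)) ((Lap b₀).prod (Lap b₁)) :=
    (hL₀.add hL₁).const_mul 2
  calc ∫ p : ℝ × ℝ, Dsum α β p.1 p.2 ∂((Lap b₀).prod (Lap b₁))
      ≤ ∫ p : ℝ × ℝ, errStar μ₀ μ₁ h₀ h₁ (G α β p.1 p.2) + 2 * (|p.1| + |p.2|)
          ∂((Lap b₀).prod (Lap b₁)) := by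
        refine integral_mono_of_nonneg (ae_of_all _ fun p => ?_) (hErr.add hNoise)
          (ae_of_all _ fun p => Dsum_le_errStar_G_add hα hβ p.1 p.2)
        exact Dsum_nonneg (hα ▸ measureReal_nonneg) (hα ▸ measureReal_le_one)
          (hβ ▸ measureReal_nonneg) (hβ ▸ measureReal_le_one) p.1 p.2
    _ = (∫ p : ℝ × ℝ, errStar μ₀ μ₁ h₀ h₁ (G α β p.1 p.2) ∂((Lap b₀).prod (Lap b₁))) +
          2 * (b₀ + b₁) := by
        rw [integral_add hErr hNoise, integral_const_mul,
          integral_add hL₀ hL₁, integral_fun_fst (fun x => |x|),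
          integral_fun_snd (fun x => |x|), integral_abs_Lap hb₀, integral_abs_Lap hb₁]
        simp
    _ ≤ _ := by linarith

/-- **Proposition 2 (utility guarantee).** In expectation over the independent Laplace
noises, the prediction-change sum of Algorithm 2's classifier exceeds the expected optimal
prediction-change sum by at most `(5/2)·(b₀ + b₁)`. -/
theorem algorithm2_utility_expectation
    {𝒳 : Type*} [MeasurableSpace 𝒳] [Nonempty 𝒳]
    (μ₀ μ₁ : Measure 𝒳) [IsProbabilityMeasure μ₀] [IsProbabilityMeasure μ₁]
    (h₀ h₁ : 𝒳 → Bool) (hm₀ : Measurable h₀) (hm₁ : Measurable h₁)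
    (α β : ℝ)
    (hα : α = (μ₀ {x | h₀ x = true}).toReal)
    (hβ : β = (μ₁ {x | h₁ x = true}).toReal)
    (b₀ b₁ : ℝ) (hb₀ : 0 < b₀) (hb₁ : 0 < b₁) :
    ∫ p : ℝ × ℝ, Dsum α β p.1 p.2 ∂((Lap b₀).prod (Lap b₁)) ≤
      (∫ p : ℝ × ℝ, errStar μ₀ μ₁ h₀ h₁ (G α β p.1 p.2) ∂((Lap b₀).prod (Lap b₁))) +
        (5 / 2) * (b₀ + b₁) :=
  algorithm2_utility_expectation_general μ₀ μ₁ h₀ h₁ α β hα hβ b₀ b₁ hb₀ hb₁
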